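/- For i,j,p with i,j ≥ 1 and p ≥ 0, the total number of occurrences of σ = π_{i,j,p} in all permutations of S_n(132,321) equals binomial(n+2, i+j+p+2). Equivalently, the expected number of occurrences of σ in a uniformly random 132- and 321-avoiding permutation of [n] is binomial(n+2, i+j+p+2) / (binomial(n,2)+1). -/

import Mathlib

/-- An occurrence of the pattern `σ` in `π` is a strictly increasing choice of
indices whose images under `π` are order-isomorphic to `σ`. -/
def IsOccurrence {m n : ℕ} (σ : Equiv.Perm (Fin m)) (π : Equiv.Perm (Fin n))
    (f : Fin m → Fin n) : Prop :=
  StrictMono f ∧ ∀ j k : Fin m, π (f j) < π (f k) ↔ σ j < σ k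

/-- `numOcc σ π` is the number of occurrences of the pattern `σ` in `π`. -/
noncomputable def numOcc {m n : ℕ} (σ : Equiv.Perm (Fin m)) (π : Equiv.Perm (Fin n)) : ℕ :=
  Nat.card {f : Fin m → Fin n // IsOccurrence σ π f}

def p123 : Equiv.Perm (Fin 3) := 1
def p132 : Equiv.Perm (Fin 3) := Equiv.swap 1 2
def p213 : Equiv.Perm (Fin 3) := Equiv.swap 0 1
def p321 : Equiv.Perm (Fin 3) := Equiv.swap 0 2
def p231 : Equiv.Perm (Fin 3) := finRotate 3
def p312 : Equiv.Perm (Fin 3) := (finRotate 3)⁻¹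

/-- The composition (direct sum) `σ * τ` of two permutations. -/
def permComp {m n : ℕ} (σ : Equiv.Perm (Fin m)) (τ : Equiv.Perm (Fin n)) :
    Equiv.Perm (Fin (m + n)) :=
  Equiv.permCongr finSumFinEquiv (Equiv.sumCongr σ τ)

/-- Permutations of arbitrary (finite) length. -/
def SPerm := Σ n : ℕ, Equiv.Perm (Fin n)

def SPerm.comp (p q : SPerm) : SPerm := ⟨p.1 + q.1, permComp p.2 q.2⟩

/-- The permutation `(ℓ+1, …, ℓ+k, 1, …, ℓ)` of `[k+ℓ]`. -/
def rotBlock (k ℓ : ℕ) : Equiv.Perm (Fin (k + ℓ)) :=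
  finSumFinEquiv.symm.trans ((Equiv.sumComm (Fin k) (Fin ℓ)).trans
    (finSumFinEquiv.trans (finCongr (Nat.add_comm ℓ k))))

/-- The permutation `(ℓ+1, …, ℓ+k, 1, …, ℓ, k+ℓ+1, …, k+ℓ+m)` of `[k+ℓ+m]`. -/
def piKLM (k ℓ m : ℕ) : Equiv.Perm (Fin (k + ℓ + m)) :=
  permComp (rotBlock k ℓ) (1 : Equiv.Perm (Fin m))

/-!
Let `π` avoid 132 and 321, and put `k = π⁻¹(0)`, `ℓ = π(0)`. Before position `k` the entries of `π`
increase (a descent there would form a 321 with the entry `0`), and from position `k` on they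
increase as well (a descent would form a 132 with the entry `0`). A value missing from where it
should be would then create a 132 with the entry `π(0)`, so `π = π_{k,ℓ,n-k-ℓ}`.

Since `i, j ≥ 1`, the descents of `σ = π_{i,j,p}` force an occurrence of `σ` in `π_{k,ℓ,m}` to send
the three runs of `σ` into the three runs of `π_{k,ℓ,m}`, in increasing order; so there are
`C(k,i) C(ℓ,j) C(m,p)` occurrences. Summing over `k + ℓ + m = n` and applying
`∑_{a+b=N} C(a,r) C(b,s) = C(N+1, r+s+1)` twice gives `C(n+2, i+j+p+2)`.
-/

open Finset

lemma numOcc_eq_zero_iff {a n : ℕ} (σ : Equiv.Perm (Fin a)) (π : Equiv.Perm (Fin n)) :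
    numOcc σ π = 0 ↔ ∀ f, ¬ IsOccurrence σ π f := by
  simp [numOcc, Finite.card_eq_zero_iff, isEmpty_subtype]

lemma numOcc_eq_zero_iff_forall_three {n : ℕ} (σ : Equiv.Perm (Fin 3))
    (π : Equiv.Perm (Fin n)) : numOcc σ π = 0 ↔ ∀ a b c, ¬ IsOccurrence σ π ![a, b, c] := by
  rw [numOcc_eq_zero_iff]
  refine ⟨fun h a b c => h _, fun h f => ?_⟩
  rw [show f = ![f 0, f 1, f 2] by ext x; fin_cases x <;> rfl]
  exact h _ _ _

lemma isOccurrence_p132_iff {n : ℕ} (π : Equiv.Perm (Fin n)) (a b c : Fin n) :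
    IsOccurrence p132 π ![a, b, c] ↔ a < b ∧ b < c ∧ π a < π c ∧ π c < π b := by
  simp [IsOccurrence, Fin.strictMono_iff_lt_succ, Fin.forall_fin_succ, p132,
    Equiv.swap_apply_of_ne_of_ne]
  omega

lemma isOccurrence_p321_iff {n : ℕ} (π : Equiv.Perm (Fin n)) (a b c : Fin n) :
    IsOccurrence p321 π ![a, b, c] ↔ a < b ∧ b < c ∧ π c < π b ∧ π b < π a := by
  simp [IsOccurrence, Fin.strictMono_iff_lt_succ, Fin.forall_fin_succ, p321,
    Equiv.swap_apply_of_ne_of_ne]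
  omega

def piFun (k ℓ y : ℕ) : ℕ := if y < k then y + ℓ else if y < k + ℓ then y - k else y

lemma piFun_lt_piFun_iff_of_lt {k ℓ u v : ℕ} (huv : u < v) :
    piFun k ℓ v < piFun k ℓ u ↔ u < k ∧ k ≤ v ∧ v < k + ℓ := by
  unfold piFun
  split_ifs <;> omega

lemma rotBlock_val (k ℓ : ℕ) (x : Fin (k + ℓ)) : (rotBlock k ℓ x : ℕ) = piFun k ℓ x := by
  induction x using Fin.addCases <;> simp [rotBlock, piFun]

lemma piKLM_val (k ℓ m : ℕ) (x : Fin (k + ℓ + m)) : (piKLM k ℓ m x : ℕ) = piFun k ℓ x := by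
  induction x using Fin.addCases with
  | left x => simp [piKLM, permComp, rotBlock_val]
  | right x =>
    simp only [piKLM, permComp, Equiv.permCongr_apply, finSumFinEquiv_symm_apply_natAdd,
      Equiv.sumCongr_apply, Equiv.Perm.coe_one, Sum.map_inr, id_eq, finSumFinEquiv_apply_right,
      Fin.val_natAdd, piFun]
    split_ifs <;> omega

def castPiKLM {n k ℓ m : ℕ} (h : k + ℓ + m = n) : Equiv.Perm (Fin n) :=
  (finCongr h).permCongr (piKLM k ℓ m)

lemma castPiKLM_val {n k ℓ m : ℕ} (h : k + ℓ + m = n) (x : Fin n) :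
    (castPiKLM h x : ℕ) = piFun k ℓ x := by
  simp [castPiKLM, Equiv.permCongr_apply, piKLM_val]

lemma numOcc_castPiKLM {a n k ℓ m : ℕ} (σ : Equiv.Perm (Fin a)) (h : k + ℓ + m = n) :
    numOcc σ (castPiKLM h) = numOcc σ (piKLM k ℓ m) := by
  subst h
  rfl

lemma eq_of_castPiKLM_eq {n k ℓ k' ℓ' m m' : ℕ} {h : k + ℓ + m = n} {h' : k' + ℓ' + m' = n}
    (hk : 1 ≤ k) (hℓ : 1 ≤ ℓ) (he : castPiKLM h = castPiKLM h') : k = k' ∧ ℓ = ℓ' := by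
  have e₀ := congrArg (fun π : Equiv.Perm (Fin n) => (π ⟨0, by omega⟩ : ℕ)) he
  have eₖ := congrArg (fun π : Equiv.Perm (Fin n) => (π ⟨k, by omega⟩ : ℕ)) he
  simp only [castPiKLM_val, piFun] at e₀ eₖ
  split_ifs at e₀ eₖ <;> omega

lemma numOcc_p132_castPiKLM {n k ℓ m : ℕ} (h : k + ℓ + m = n) :
    numOcc p132 (castPiKLM h) = 0 := by
  rw [numOcc_eq_zero_iff_forall_three]
  intro a b c
  simp only [isOccurrence_p132_iff, Fin.lt_def, castPiKLM_val, piFun]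
  split_ifs <;> omega

lemma numOcc_p321_castPiKLM {n k ℓ m : ℕ} (h : k + ℓ + m = n) :
    numOcc p321 (castPiKLM h) = 0 := by
  rw [numOcc_eq_zero_iff_forall_three]
  intro a b c
  simp only [isOccurrence_p321_iff, Fin.lt_def, castPiKLM_val, piFun]
  split_ifs <;> omega

def RespectsRuns {M N : ℕ} (i j k ℓ : ℕ) (f : Fin M → Fin N) : Prop :=
  ∀ x, ((f x : ℕ) < k ↔ (x : ℕ) < i) ∧ ((f x : ℕ) < k + ℓ ↔ (x : ℕ) < i + j)

lemma isOccurrence_piKLM_iff {i j p k ℓ m : ℕ} (hi : 1 ≤ i) (hj : 1 ≤ j)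
    (f : Fin (i + j + p) → Fin (k + ℓ + m)) :
    IsOccurrence (piKLM i j p) (piKLM k ℓ m) f ↔ StrictMono f ∧ RespectsRuns i j k ℓ f := by
  constructor
  · rintro ⟨hf, hord⟩
    have descent : ∀ x y : Fin (i + j + p), (x : ℕ) < y →
        ((x : ℕ) < i ∧ i ≤ y ∧ (y : ℕ) < i + j ↔
          (f x : ℕ) < k ∧ k ≤ f y ∧ (f y : ℕ) < k + ℓ) := by
      intro x y hxy
      have := hord y x
      rwa [Fin.lt_def, Fin.lt_def, piKLM_val, piKLM_val, piKLM_val, piKLM_val,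
        piFun_lt_piFun_iff_of_lt (hf hxy), piFun_lt_piFun_iff_of_lt hxy, iff_comm] at this
    refine ⟨hf, fun x => ?_⟩
    -- the pairs `(0, x)`, `(x, i)` and `(0, i)` locate `f x` among the runs of `π_{k,ℓ,m}`
    have h0x := descent ⟨0, by omega⟩ x
    have hxi := descent x ⟨i, by omega⟩
    have h0i := descent ⟨0, by omega⟩ ⟨i, by omega⟩
    have hix := @hf ⟨i, by omega⟩ x
    simp only [Fin.lt_def] at *
    omega
  · rintro ⟨hf, hruns⟩
    refine ⟨hf, fun x y => ?_⟩
    have hx := hruns x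
    have hy := hruns y
    have hxy := hf.lt_iff_lt (a := x) (b := y)
    rw [Fin.lt_def, Fin.lt_def, piKLM_val, piKLM_val, piKLM_val, piKLM_val]
    unfold piFun
    split_ifs <;> omega

lemma OrderEmbedding.val_lt_val_iff {a b : ℕ} (g : Fin a ↪o Fin b) (x y : Fin a) :
    (g x : ℕ) < g y ↔ (x : ℕ) < y := by
  rw [← Fin.lt_def, ← Fin.lt_def, g.lt_iff_lt]

def appendRuns {i j p k ℓ m : ℕ} (g₁ : Fin i ↪o Fin k) (g₂ : Fin j ↪o Fin ℓ)
    (g₃ : Fin p ↪o Fin m) : Fin (i + j + p) → Fin (k + ℓ + m) :=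
  Fin.append (Fin.append (fun x => Fin.castAdd m (Fin.castAdd ℓ (g₁ x)))
    (fun y => Fin.castAdd m (Fin.natAdd k (g₂ y)))) (fun z => Fin.natAdd (k + ℓ) (g₃ z))

section appendRuns

variable {i j p k ℓ m : ℕ} (g₁ : Fin i ↪o Fin k) (g₂ : Fin j ↪o Fin ℓ) (g₃ : Fin p ↪o Fin m)

lemma appendRuns_strictMono : StrictMono (appendRuns g₁ g₂ g₃) := by
  intro x y hxy
  induction x using Fin.addCases <;> (try rename_i x; induction x using Fin.addCases) <;>
    induction y using Fin.addCases <;> (try rename_i y; induction y using Fin.addCases) <;>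
    simp only [appendRuns, Fin.append_left, Fin.append_right, Fin.lt_def, Fin.val_castAdd,
      Fin.val_natAdd, add_lt_add_iff_left, OrderEmbedding.val_lt_val_iff] at hxy ⊢ <;> omega

lemma appendRuns_respectsRuns : RespectsRuns i j k ℓ (appendRuns g₁ g₂ g₃) := by
  intro x
  induction x using Fin.addCases <;> (try rename_i x; induction x using Fin.addCases) <;>
    simp only [appendRuns, Fin.append_left, Fin.append_right, Fin.val_castAdd, Fin.val_natAdd] <;>
    omega

end appendRuns

def subEmb {a M : ℕ} (b c : ℕ) (g : Fin a → Fin M) (hg : StrictMono g)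
    (hc : ∀ x, c ≤ (g x : ℕ) ∧ (g x : ℕ) < c + b) : Fin a ↪o Fin b :=
  OrderEmbedding.ofStrictMono (fun x => ⟨g x - c, by have := hc x; omega⟩) fun x y hxy => by
    have := hg hxy
    have := hc x
    rw [Fin.lt_def] at *
    dsimp only
    omega

@[simp]
lemma subEmb_val {a M b c : ℕ} {g : Fin a → Fin M} {hg hc} (x : Fin a) :
    (subEmb b c g hg hc x : ℕ) = g x - c :=
  rfl

def respectsRunsEquiv (i j p k ℓ m : ℕ) :
    {f : Fin (i + j + p) → Fin (k + ℓ + m) // StrictMono f ∧ RespectsRuns i j k ℓ f} ≃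
      (Fin i ↪o Fin k) × (Fin j ↪o Fin ℓ) × (Fin p ↪o Fin m) where
  toFun f :=
    (subEmb k 0 (f.1 ∘ Fin.castAdd p ∘ Fin.castAdd j)
      (f.2.1.comp ((Fin.strictMono_castAdd p).comp (Fin.strictMono_castAdd j)))
      (fun x => by
        have := f.2.2 (Fin.castAdd p (Fin.castAdd j x))
        simp only [Function.comp_apply, Fin.val_castAdd] at this ⊢
        omega),
     subEmb ℓ k (f.1 ∘ Fin.castAdd p ∘ Fin.natAdd i)
      (f.2.1.comp ((Fin.strictMono_castAdd p).comp (Fin.strictMono_natAdd i)))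
      (fun y => by
        have := f.2.2 (Fin.castAdd p (Fin.natAdd i y))
        simp only [Function.comp_apply, Fin.val_castAdd, Fin.val_natAdd] at this ⊢
        omega),
     subEmb m (k + ℓ) (f.1 ∘ Fin.natAdd (i + j)) (f.2.1.comp (Fin.strictMono_natAdd (i + j)))
      (fun z => by
        have := f.2.2 (Fin.natAdd (i + j) z)
        simp only [Function.comp_apply, Fin.val_natAdd] at this ⊢
        omega))
  invFun g := ⟨appendRuns g.1 g.2.1 g.2.2, appendRuns_strictMono _ _ _,
    appendRuns_respectsRuns _ _ _⟩
  left_inv f := by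
    ext x
    have := f.2.2 x
    induction x using Fin.addCases <;> (try rename_i x; induction x using Fin.addCases) <;>
      simp only [appendRuns, Fin.append_left, Fin.append_right, Fin.val_castAdd, Fin.val_natAdd,
        subEmb_val, Function.comp_apply] at this ⊢ <;> omega
  right_inv g := by
    ext <;> simp [appendRuns]

lemma card_orderEmbedding_fin (a b : ℕ) : Nat.card (Fin a ↪o Fin b) = b.choose a := by
  rw [Nat.card_congr Set.powersetCard.ofFinEmbEquiv, Set.powersetCard.card, Nat.card_fin]

lemma numOcc_piKLM_piKLM {i j p : ℕ} (hi : 1 ≤ i) (hj : 1 ≤ j) (k ℓ m : ℕ) :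
    numOcc (piKLM i j p) (piKLM k ℓ m) = k.choose i * ℓ.choose j * m.choose p := by
  rw [numOcc, Nat.card_congr ((Equiv.subtypeEquivRight (isOccurrence_piKLM_iff hi hj)).trans
    (respectsRunsEquiv i j p k ℓ m)), Nat.card_prod, Nat.card_prod, card_orderEmbedding_fin,
    card_orderEmbedding_fin, card_orderEmbedding_fin, mul_assoc]

lemma numOcc_piKLM_castPiKLM {i j p n k ℓ m : ℕ} (hi : 1 ≤ i) (hj : 1 ≤ j)
    (h : k + ℓ + m = n) :
    numOcc (piKLM i j p) (castPiKLM h) = k.choose i * ℓ.choose j * m.choose p := by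
  rw [numOcc_castPiKLM, numOcc_piKLM_piKLM hi hj]

section Avoider

variable {n : ℕ} {π : Equiv.Perm (Fin (n + 1))}
  (h132 : ∀ a b c, ¬ (a < b ∧ b < c ∧ π a < π c ∧ π c < π b))
  (h321 : ∀ a b c, ¬ (a < b ∧ b < c ∧ π c < π b ∧ π b < π a))

lemma apply_pos_of_ne_symm_zero {x : Fin (n + 1)} (hx : x ≠ π.symm 0) : 0 < π x :=
  Fin.pos_iff_ne_zero.2 fun h => hx (π.eq_symm_apply.2 h)

include h321 in
lemma strictMonoOn_Iio_symm_zero : StrictMonoOn π (Set.Iio (π.symm 0)) := by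
  intro a _ b hb hab
  by_contra h
  exact h321 a b (π.symm 0) ⟨hab, hb, by simpa using apply_pos_of_ne_symm_zero hb.ne,
    lt_of_le_of_ne (not_lt.1 h) (π.injective.ne hab.ne')⟩

include h132 in
lemma strictMonoOn_Ici_symm_zero : StrictMonoOn π (Set.Ici (π.symm 0)) := by
  intro b hb c _ hbc
  rcases (Set.mem_Ici.1 hb).eq_or_lt with hkb | hkb
  · rw [← hkb, π.apply_symm_apply]
    exact apply_pos_of_ne_symm_zero (hkb.trans_lt hbc).ne'
  · by_contra h
    exact h132 (π.symm 0) b c ⟨hkb, hbc,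
      by simpa using apply_pos_of_ne_symm_zero (hkb.trans hbc).ne',
      lt_of_le_of_ne (not_lt.1 h) (π.injective.ne hbc.ne')⟩

include h132 h321 in
lemma val_apply_of_lt_symm_zero {x : Fin (n + 1)} (hx : x < π.symm 0) :
    (π x : ℕ) = π 0 + x := by
  have mono := strictMonoOn_Iio_symm_zero h321
  induction x using Fin.induction with
  | zero => simp
  | succ x ih =>
    have hlt : x.castSucc < x.succ := Fin.castSucc_lt_succ
    have ih := ih (hlt.trans hx)
    have hstep := mono (hlt.trans hx) hx hlt
    by_contra hne
    -- the value `π 0 + (x + 1)` is skipped; before position `π⁻¹ 0` it would break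
    -- monotonicity, after it, it would form a 132 with the positions `0` and `x + 1`
    have hv : (π 0 : ℕ) + (x + 1) < n + 1 := by
      have := (π x.succ).isLt
      simp only [Fin.lt_def, Fin.val_succ, Fin.val_castSucc] at *
      omega
    obtain ⟨c, hc⟩ : ∃ c, (π c : ℕ) = π 0 + (x + 1) := ⟨π.symm ⟨_, hv⟩, by simp⟩
    rcases lt_or_ge c (π.symm 0) with hck | hck
    · have h₁ := mono.lt_iff_lt hck hx
      have h₂ := mono.lt_iff_lt (hlt.trans hx) hck
      simp only [Fin.lt_def, Fin.val_succ, Fin.val_castSucc] at *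
      omega
    · refine h132 0 x.succ c ⟨Fin.succ_pos x, hx.trans_le hck, ?_, ?_⟩ <;>
        simp only [Fin.lt_def, Fin.val_succ, Fin.val_castSucc] at * <;> omega

include h132 h321 in
lemma lt_symm_zero_of_apply_mem_Ico {y : Fin (n + 1)}
    (hy : (π y : ℕ) ∈ Set.Ico (π 0 : ℕ) (π 0 + π.symm 0)) : y < π.symm 0 := by
  obtain ⟨h₁, h₂⟩ := hy
  have hc : (⟨π y - π 0, by omega⟩ : Fin (n + 1)) < π.symm 0 := by
    rw [Fin.lt_def]
    dsimp only
    omega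
  have hval := val_apply_of_lt_symm_zero h132 h321 hc
  have : (⟨π y - π 0, by omega⟩ : Fin (n + 1)) = y :=
    π.injective (Fin.ext (by dsimp only at hval; omega))
  exact this ▸ hc

include h132 h321 in
lemma val_apply_succ_of_symm_zero_lt {x : Fin n} (hkx : π.symm 0 < x.succ)
    (ih : (π x.castSucc : ℕ) = piFun (π.symm 0) (π 0) x.castSucc) :
    (π x.succ : ℕ) = piFun (π.symm 0) (π 0) x.succ := by
  have mono := strictMonoOn_Ici_symm_zero h132
  have hle : π.symm 0 ≤ x.castSucc := Fin.le_castSucc_iff.2 hkx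
  have hstep := mono hle hkx.le Fin.castSucc_lt_succ
  have hmem : ¬ ((π 0 : ℕ) ≤ π x.succ ∧ (π x.succ : ℕ) < π 0 + π.symm 0) := fun h =>
    (lt_symm_zero_of_apply_mem_Ico h132 h321 h).not_ge hkx.le
  have hs := Fin.val_succ x
  have hcs := Fin.val_castSucc x
  by_contra hne
  rcases lt_or_gt_of_ne hne with hlt | hgt
  · simp only [Fin.lt_def, piFun] at *
    split_ifs at * <;> omega
  have hv : piFun (π.symm 0) (π 0) x.succ < n + 1 := by have := (π x.succ).isLt; omega
  obtain ⟨c, hc⟩ : ∃ c, (π c : ℕ) = piFun (π.symm 0) (π 0) x.succ :=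
    ⟨π.symm ⟨_, hv⟩, by simp⟩
  rcases lt_or_ge c (π.symm 0) with hck | hck
  · have := val_apply_of_lt_symm_zero h132 h321 hck
    simp only [Fin.lt_def, piFun] at *
    split_ifs at * <;> omega
  · have h₁ := mono.lt_iff_lt hck hkx.le
    have h₂ := mono.lt_iff_lt hle hck
    simp only [Fin.lt_def, Fin.le_def, piFun] at *
    split_ifs at * <;> omega

include h132 h321 in
lemma val_apply_of_symm_zero_le {x : Fin (n + 1)} (hx : π.symm 0 ≤ x) :
    (π x : ℕ) = piFun (π.symm 0) (π 0) x := by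
  induction x using Fin.induction with
  | zero =>
    have hk : π.symm 0 = 0 := Fin.le_zero_iff.1 hx
    have : π 0 = 0 := by simpa [hk] using π.apply_symm_apply 0
    simp [this, hk, piFun]
  | succ x ih =>
    rcases hx.eq_or_lt with hkx | hkx
    · have hℓ : π 0 ≠ 0 := fun h => (Fin.succ_ne_zero x) (hkx ▸ π.symm_apply_eq.2 h.symm)
      rw [← hkx, π.apply_symm_apply, piFun, if_neg (lt_irrefl _), if_pos]
      · simp
      · have := Fin.pos_iff_ne_zero.2 hℓ
        rw [Fin.lt_def] at this
        omega
    · exact val_apply_succ_of_symm_zero_lt h132 h321 hkx (ih (Fin.le_castSucc_iff.2 hkx))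

end Avoider

theorem exists_eq_castPiKLM_of_avoids {n : ℕ} (π : Equiv.Perm (Fin n))
    (h132 : numOcc p132 π = 0) (h321 : numOcc p321 π = 0) :
    ∃ k ℓ m, ∃ h : k + ℓ + m = n, π = castPiKLM h := by
  cases n with
  | zero => exact ⟨0, 0, 0, rfl, Subsingleton.elim _ _⟩
  | succ n =>
    rw [numOcc_eq_zero_iff_forall_three] at h132 h321
    simp only [isOccurrence_p132_iff, isOccurrence_p321_iff] at h132 h321
    have hkℓ : (π.symm 0 : ℕ) + π 0 ≤ n + 1 := by
      rcases Nat.eq_zero_or_pos (π.symm 0 : ℕ) with hk | hk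
      · have h0 := π.apply_symm_apply 0
        rw [Fin.val_eq_zero_iff.1 hk] at h0
        simp [h0, hk]
      · have hlast : (⟨(π.symm 0 : ℕ) - 1, by omega⟩ : Fin (n + 1)) < π.symm 0 := by
          rw [Fin.lt_def]
          dsimp only
          omega
        have := val_apply_of_lt_symm_zero h132 h321 hlast
        have := (π ⟨(π.symm 0 : ℕ) - 1, by omega⟩).isLt
        dsimp only at *
        omega
    refine ⟨π.symm 0, π 0, n + 1 - (π.symm 0 + π 0), by omega, Equiv.ext fun x => Fin.ext ?_⟩
    rw [castPiKLM_val]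
    rcases lt_or_ge x (π.symm 0) with hx | hx
    · rw [val_apply_of_lt_symm_zero h132 h321 hx, piFun, if_pos (Fin.lt_def.1 hx), add_comm]
    · exact val_apply_of_symm_zero_le h132 h321 hx

theorem Nat.sum_antidiagonal_choose_mul_choose (a b N : ℕ) :
    ∑ x ∈ antidiagonal N, x.1.choose a * x.2.choose b = (N + 1).choose (a + b + 1) := by
  induction N generalizing b with
  | zero =>
    rw [Finset.Nat.antidiagonal_zero, sum_singleton]
    cases a <;> cases b <;> simp [Nat.choose_eq_zero_of_lt]
  | succ N ih =>
    rw [Nat.sum_antidiagonal_succ']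
    cases b with
    | zero =>
      have h := ih 0
      simp only [Nat.choose_zero_right, mul_one] at h ⊢
      rw [h, Nat.choose_succ_succ' (N + 1), add_zero]
    | succ b =>
      calc (N + 1).choose a * choose 0 (b + 1) +
            ∑ x ∈ antidiagonal N, x.1.choose a * (x.2 + 1).choose (b + 1)
          = ∑ x ∈ antidiagonal N,
              (x.1.choose a * x.2.choose b + x.1.choose a * x.2.choose (b + 1)) := by
            rw [Nat.choose_zero_succ, mul_zero, zero_add]
            exact sum_congr rfl fun x _ => by rw [Nat.choose_succ_succ', mul_add]
        _ = (N + 1 + 1).choose (a + (b + 1) + 1) := by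
          rw [sum_add_distrib, ih, ih, Nat.choose_succ_succ' (N + 1)]
          ring_nf

theorem sum_sigma_antidiagonal_choose_mul_choose_mul_choose (a b c n : ℕ) :
    ∑ x ∈ (antidiagonal n).sigma (fun x => antidiagonal x.2),
      x.1.1.choose a * x.2.1.choose b * x.2.2.choose c = (n + 2).choose (a + b + c + 2) := by
  have h := Nat.sum_antidiagonal_choose_mul_choose a (b + c + 1) (n + 1)
  rw [Nat.sum_antidiagonal_succ', Nat.choose_zero_succ, mul_zero, zero_add] at h
  rw [sum_sigma]
  simp_rw [mul_assoc, ← mul_sum, Nat.sum_antidiagonal_choose_mul_choose]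
  rw [h]
  ring_nf

open scoped Classical in
theorem total_occurrences_in_avoid_132_321 (n i j p : ℕ) (hi : 1 ≤ i) (hj : 1 ≤ j) :
    ∑ π ∈ Finset.univ.filter
        (fun π : Equiv.Perm (Fin n) => numOcc p132 π = 0 ∧ numOcc p321 π = 0),
      numOcc (piKLM i j p) π = (n + 2).choose (i + j + p + 2) := by
  rw [← sum_sigma_antidiagonal_choose_mul_choose_mul_choose i j p n]
  -- every triple with `k = 0` or `ℓ = 0` gives the identity, and has weight `0`
  refine (sum_bij_ne_zero (fun x hx _ => castPiKLM (k := x.1.1) (ℓ := x.2.1) (m := x.2.2)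
    (by simp only [mem_sigma, HasAntidiagonal.mem_antidiagonal] at hx; omega)) ?_ ?_ ?_ ?_).symm
  · intro x _ _
    simp [numOcc_p132_castPiKLM, numOcc_p321_castPiKLM]
  · rintro ⟨⟨k, r⟩, ⟨ℓ, m⟩⟩ hx hx₀ ⟨⟨k', r'⟩, ⟨ℓ', m'⟩⟩ hy _ he
    simp only [mem_sigma, HasAntidiagonal.mem_antidiagonal] at hx hy
    dsimp only at he
    simp only [ne_eq, mul_eq_zero, Nat.choose_eq_zero_iff, not_or, not_lt] at hx₀
    obtain ⟨rfl, rfl⟩ := eq_of_castPiKLM_eq (by omega) (by omega) he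
    obtain ⟨rfl, rfl⟩ : r = r' ∧ m = m' := by omega
    rfl
  · intro π hπ hne
    obtain ⟨k, ℓ, m, h, rfl⟩ := exists_eq_castPiKLM_of_avoids π (mem_filter.1 hπ).2.1
      (mem_filter.1 hπ).2.2
    refine ⟨⟨(k, ℓ + m), (ℓ, m)⟩, ?_, ?_, rfl⟩
    · simp only [mem_sigma, HasAntidiagonal.mem_antidiagonal, and_true]
      omega
    · rwa [numOcc_piKLM_castPiKLM hi hj] at hne
  · intro x _ _
    rw [numOcc_piKLM_castPiKLM hi hj]
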